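/- For all w₁, w₂ ∈ U_ad and all x, y ∈ ℝ^d, the modified nonlocal means kernels satisfy |γ_{w₁}(x,y) − γ_{w₂}(x,y)| ≤ 4 ‖f‖²_{L^∞} ‖w₁ − w₂‖_{L¹(B_ρ(0))}; in particular, if w_n → w in L²(B_ρ(0)) with w_n, w ∈ U_ad, then γ_{w_n} → γ_w uniformly on ℝ^d × ℝ^d. -/

import Mathlib

open MeasureTheory Filter

noncomputable section

/-- Points of `ℝ^d`, with the sup norm. -/
abbrev Rd (d : ℕ) : Type := Fin d → ℝ

/-- The interaction domain `Ω_I` of `Ω` with interaction radius `ε`. -/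
def interDom {d : ℕ} (Ω : Set (Rd d)) (ε : ℝ) : Set (Rd d) :=
  {y | y ∉ Ω ∧ ∃ x ∈ Ω, ‖y - x‖ ≤ ε}

/-- The admissible set of weights `U_ad = {w ∈ L²(B_ρ(0)) : 0 ≤ w ≤ W a.e.}`. -/
def Uad {d : ℕ} (ρ Wb : ℝ) : Set (Rd d → ℝ) :=
  {w | MemLp w 2 (volume.restrict (Metric.closedBall (0 : Rd d) ρ)) ∧
    ∀ᵐ τ ∂volume.restrict (Metric.closedBall (0 : Rd d) ρ), 0 ≤ w τ ∧ w τ ≤ Wb}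

/-- The modified nonlocal means kernel `γ_w`. -/
def kernelW {d : ℕ} (ρ ε : ℝ) (f w : Rd d → ℝ) (x y : Rd d) : ℝ :=
  if ‖x - y‖ ≤ ε then
    Real.exp (-∫ τ in Metric.closedBall (0 : Rd d) ρ, w τ * (f (x + τ) - f (y + τ)) ^ 2)
  else 0

/-- The linearized kernel `γ̃_h` at base weight `w` in direction `h`. -/
def kernelLin {d : ℕ} (ρ ε : ℝ) (f w h : Rd d → ℝ) (x y : Rd d) : ℝ :=
  if ‖x - y‖ ≤ ε then
    -kernelW ρ ε f w x y *
      ∫ τ in Metric.closedBall (0 : Rd d) ρ, h τ * (f (x + τ) - f (y + τ)) ^ 2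
  else 0

/-- The nonlocal bilinear form `(u,v)` over `A` with kernel `γ`. -/
def innerV {d : ℕ} (A : Set (Rd d)) (γ : Rd d → Rd d → ℝ) (u v : Rd d → ℝ) : ℝ :=
  ∫ x in A, ∫ y in A, (u x - u y) * (v x - v y) * γ x y

/-- The constrained space `V_c`: square integrable on `A = Ω̂`, vanishing a.e. on `I = Ω_I`. -/
def Vc {d : ℕ} (A I : Set (Rd d)) : Set (Rd d → ℝ) :=
  {v | MemLp v 2 (volume.restrict A) ∧ ∀ᵐ x ∂volume.restrict I, v x = 0}

/-- The `L²(s)` norm. -/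
def L2norm {d : ℕ} (s : Set (Rd d)) (v : Rd d → ℝ) : ℝ :=
  (eLpNorm v 2 (volume.restrict s)).toReal

/-!
On `|x - y| ≤ ε` the kernel is `exp (-∫ w g)` with `g τ = (f (x + τ) - f (y + τ))²`, and
`0 ≤ g ≤ 4 ‖f‖²_∞` a.e. Since `exp` is 1-Lipschitz on `(-∞, 0]` and the exponents are
nonpositive for nonnegative weights, the kernels differ by at most `4 ‖f‖²_∞ ∫ |w₁ - w₂|`,
uniformly in `(x, y)`. On the bounded ball `B_ρ(0)` the `L¹` norm is dominated by the `L²`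
norm, so `L²` convergence of the weights gives uniform convergence of the kernels.
-/

lemma Real.abs_exp_neg_sub_exp_neg_le {a b : ℝ} (ha : 0 ≤ a) (hb : 0 ≤ b) :
    |Real.exp (-a) - Real.exp (-b)| ≤ |a - b| := by
  wlog hba : b ≤ a generalizing a b
  · rw [abs_sub_comm, abs_sub_comm a b]
    exact this hb ha (le_of_not_ge hba)
  have hsplit : Real.exp (-a) = Real.exp (-b) * Real.exp (-(a - b)) := by
    rw [← Real.exp_add]; ring_nf
  have hexp_le_one : Real.exp (-b) ≤ 1 := Real.exp_le_one_iff.mpr (by linarith)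
  have htangent : 1 - (a - b) ≤ Real.exp (-(a - b)) := Real.one_sub_le_exp_neg _
  have hexp_le : Real.exp (-(a - b)) ≤ 1 := Real.exp_le_one_iff.mpr (by linarith)
  rw [abs_of_nonpos (by nlinarith [Real.exp_pos (-b)]), abs_of_nonneg (by linarith), hsplit]
  nlinarith [Real.exp_pos (-b)]

namespace MeasureTheory

variable {α : Type*} {m : MeasurableSpace α} {μ : Measure α}

lemma abs_integral_mul_le_of_abs_le {v g : α → ℝ} {C : ℝ} (hv : Integrable v μ)
    (hg : ∀ᵐ τ ∂μ, |g τ| ≤ C) :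
    |∫ τ, v τ * g τ ∂μ| ≤ C * ∫ τ, |v τ| ∂μ := by
  have hpointwise : ∀ᵐ τ ∂μ, ‖v τ * g τ‖ ≤ C * |v τ| := by
    filter_upwards [hg] with τ hgτ
    rw [Real.norm_eq_abs, abs_mul, mul_comm C]
    exact mul_le_mul_of_nonneg_left hgτ (abs_nonneg _)
  have key := norm_integral_le_of_norm_le (hv.abs.const_mul C) hpointwise
  rwa [Real.norm_eq_abs, integral_const_mul] at key

lemma abs_exp_neg_integral_mul_sub_le {w₁ w₂ g : α → ℝ} {C : ℝ}
    (hw₁ : Integrable w₁ μ) (hw₂ : Integrable w₂ μ)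
    (hw₁_nonneg : 0 ≤ᵐ[μ] w₁) (hw₂_nonneg : 0 ≤ᵐ[μ] w₂)
    (hg_meas : AEStronglyMeasurable g μ) (hg : ∀ᵐ τ ∂μ, 0 ≤ g τ ∧ g τ ≤ C) :
    |Real.exp (-∫ τ, w₁ τ * g τ ∂μ) - Real.exp (-∫ τ, w₂ τ * g τ ∂μ)| ≤
      C * ∫ τ, |w₁ τ - w₂ τ| ∂μ := by
  have hg_abs : ∀ᵐ τ ∂μ, |g τ| ≤ C := by
    filter_upwards [hg] with τ hgτ
    rw [abs_of_nonneg hgτ.1]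
    exact hgτ.2
  have hint : ∀ w : α → ℝ, Integrable w μ → Integrable (fun τ => w τ * g τ) μ := fun w hw =>
    hw.mul_bdd hg_meas (hg_abs.mono fun τ h => by rwa [Real.norm_eq_abs])
  have hnonneg : ∀ w : α → ℝ, 0 ≤ᵐ[μ] w → 0 ≤ ∫ τ, w τ * g τ ∂μ := fun w hw =>
    integral_nonneg_of_ae <| by
      filter_upwards [hw, hg] with τ hwτ hgτ
      exact mul_nonneg hwτ hgτ.1
  calc |Real.exp (-∫ τ, w₁ τ * g τ ∂μ) - Real.exp (-∫ τ, w₂ τ * g τ ∂μ)|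
      ≤ |∫ τ, w₁ τ * g τ ∂μ - ∫ τ, w₂ τ * g τ ∂μ| :=
        Real.abs_exp_neg_sub_exp_neg_le (hnonneg w₁ hw₁_nonneg) (hnonneg w₂ hw₂_nonneg)
    _ = |∫ τ, (w₁ τ - w₂ τ) * g τ ∂μ| := by
        rw [← integral_sub (hint w₁ hw₁) (hint w₂ hw₂)]
        simp only [sub_mul]
    _ ≤ C * ∫ τ, |w₁ τ - w₂ τ| ∂μ := abs_integral_mul_le_of_abs_le (hw₁.sub hw₂) hg_abs

lemma tendsto_integral_norm_of_tendsto_eLpNorm [IsFiniteMeasure μ] {E : Type*}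
    [NormedAddCommGroup E] {ι : Type*} {l : Filter ι} {u : ι → α → E} {p : ENNReal}
    (hp : 1 ≤ p) (hu : ∀ i, AEStronglyMeasurable (u i) μ)
    (h : Tendsto (fun i => eLpNorm (u i) p μ) l (nhds 0)) :
    Tendsto (fun i => ∫ τ, ‖u i τ‖ ∂μ) l (nhds 0) := by
  have hexponent : 0 ≤ 1 / (1 : ENNReal).toReal - 1 / p.toReal := by
    rcases eq_or_ne p ⊤ with rfl | hp_top
    · simp
    · have : 1 ≤ p.toReal := by simpa using ENNReal.toReal_mono hp_top hp
      rw [ENNReal.toReal_one, div_one, sub_nonneg]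
      exact div_le_self zero_le_one this
  have hL1 : Tendsto (fun i => eLpNorm (u i) 1 μ) l (nhds 0) := by
    have hbound := ENNReal.Tendsto.mul_const h
      (Or.inr (ENNReal.rpow_ne_top_of_nonneg hexponent (measure_ne_top μ Set.univ)))
    rw [zero_mul] at hbound
    exact tendsto_of_tendsto_of_tendsto_of_le_of_le tendsto_const_nhds hbound
      (fun _ => zero_le) fun i => eLpNorm_le_eLpNorm_mul_rpow_measure_univ hp (hu i)
  have := (ENNReal.tendsto_toReal ENNReal.zero_ne_top).comp hL1
  simpa only [Function.comp_def, toReal_eLpNorm (hu _), lpNorm_one_eq_integral_norm (hu _),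
    ENNReal.toReal_zero] using this

lemma ae_abs_comp_add_left_le {G : Type*} [MeasurableSpace G] [AddGroup G] [MeasurableAdd G]
    {μ : Measure G} [μ.IsAddLeftInvariant] {f : G → ℝ} (hf : MemLp f ⊤ μ) (x : G) :
    ∀ᵐ τ ∂μ, |f (x + τ)| ≤ lpNorm f ⊤ μ :=
  (measurePreserving_add_left μ x).quasiMeasurePreserving.ae (ae_le_lpNorm_exponent_top hf)

end MeasureTheory

lemma tendstoUniformly_of_dist_le {ι β α : Type*} [PseudoMetricSpace α] {l : Filter ι}
    {F : ι → β → α} {f : β → α} {c : ι → ℝ} (hc : Tendsto c l (nhds 0))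
    (hF : ∀ i x, dist (f x) (F i x) ≤ c i) :
    TendstoUniformly F f l := by
  rw [Metric.tendstoUniformly_iff]
  intro δ hδ
  filter_upwards [hc.eventually (gt_mem_nhds hδ)] with i hi x
  exact (hF i x).trans_lt hi

section Kernel

variable {d : ℕ} {ρ ε Wb : ℝ} {f : Rd d → ℝ}

instance isFiniteMeasure_restrict_closedBall :
    IsFiniteMeasure (volume.restrict (Metric.closedBall (0 : Rd d) ρ)) :=
  isFiniteMeasure_restrict.2 (isCompact_closedBall _ _).measure_lt_top.ne

lemma integrable_of_mem_Uad {w : Rd d → ℝ} (hw : w ∈ Uad ρ Wb) :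
    Integrable w (volume.restrict (Metric.closedBall (0 : Rd d) ρ)) :=
  hw.1.integrable one_le_two

lemma ae_nonneg_of_mem_Uad {w : Rd d → ℝ} (hw : w ∈ Uad ρ Wb) :
    0 ≤ᵐ[volume.restrict (Metric.closedBall (0 : Rd d) ρ)] w :=
  hw.2.mono fun _ h => h.1

lemma ae_sq_sub_comp_add_le (hf : MemLp f ⊤ volume) (x y : Rd d) :
    ∀ᵐ τ ∂(volume : Measure (Rd d)), 0 ≤ (f (x + τ) - f (y + τ)) ^ 2 ∧
      (f (x + τ) - f (y + τ)) ^ 2 ≤ 4 * (eLpNorm f ⊤ volume).toReal ^ 2 := by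
  filter_upwards [ae_abs_comp_add_left_le hf x, ae_abs_comp_add_left_le hf y] with τ hx hy
  rw [toReal_eLpNorm hf.1]
  obtain ⟨hx₁, hx₂⟩ := abs_le.mp hx
  obtain ⟨hy₁, hy₂⟩ := abs_le.mp hy
  exact ⟨sq_nonneg _, by nlinarith⟩

lemma aestronglyMeasurable_sq_sub_comp_add (hf : MemLp f ⊤ volume) (x y : Rd d) :
    AEStronglyMeasurable (fun τ => (f (x + τ) - f (y + τ)) ^ 2)
      (volume.restrict (Metric.closedBall (0 : Rd d) ρ)) := by
  have htranslate : ∀ z : Rd d, AEStronglyMeasurable (fun τ => f (z + τ)) volume := fun z =>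
    (hf.comp_measurePreserving (measurePreserving_add_left volume z)).1
  exact (((htranslate x).sub (htranslate y)).pow 2).restrict

lemma abs_kernelW_sub_le (hf : MemLp f ⊤ volume) {w₁ w₂ : Rd d → ℝ}
    (hw₁ : w₁ ∈ Uad ρ Wb) (hw₂ : w₂ ∈ Uad ρ Wb) (x y : Rd d) :
    |kernelW ρ ε f w₁ x y - kernelW ρ ε f w₂ x y| ≤
      4 * (eLpNorm f ⊤ volume).toReal ^ 2 *
        ∫ τ in Metric.closedBall (0 : Rd d) ρ, |w₁ τ - w₂ τ| := by
  unfold kernelW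
  split_ifs
  · exact abs_exp_neg_integral_mul_sub_le (integrable_of_mem_Uad hw₁)
      (integrable_of_mem_Uad hw₂) (ae_nonneg_of_mem_Uad hw₁) (ae_nonneg_of_mem_Uad hw₂)
      (aestronglyMeasurable_sq_sub_comp_add hf x y)
      (ae_restrict_of_ae (ae_sq_sub_comp_add_le hf x y))
  · rw [sub_self, abs_zero]
    exact mul_nonneg (by positivity) (integral_nonneg fun _ => abs_nonneg _)

end Kernel

theorem stmt12_general
    {d : ℕ} (ε : ℝ) (ρ : ℝ) (Wb : ℝ) (f : Rd d → ℝ) (hfL : MemLp f ⊤ (volume : Measure (Rd d)))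
 :
    (∀ w₁ ∈ Uad (d := d) ρ Wb, ∀ w₂ ∈ Uad (d := d) ρ Wb, ∀ x y : Rd d,
      |kernelW ρ ε f w₁ x y - kernelW ρ ε f w₂ x y| ≤
        4 * (eLpNorm f ⊤ (volume : Measure (Rd d))).toReal ^ 2 *
          ∫ τ in Metric.closedBall (0 : Rd d) ρ, |w₁ τ - w₂ τ|) ∧
      ∀ (wn : ℕ → Rd d → ℝ) (w : Rd d → ℝ),
        (∀ n, wn n ∈ Uad (d := d) ρ Wb) → w ∈ Uad (d := d) ρ Wb →
        Tendsto (fun n => eLpNorm (fun τ => wn n τ - w τ) 2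
          (volume.restrict (Metric.closedBall (0 : Rd d) ρ))) atTop (nhds 0) →
        TendstoUniformly (fun n (q : Rd d × Rd d) => kernelW ρ ε f (wn n) q.1 q.2)
          (fun q : Rd d × Rd d => kernelW ρ ε f w q.1 q.2) atTop := by
  refine ⟨fun w₁ hw₁ w₂ hw₂ x y => abs_kernelW_sub_le hfL hw₁ hw₂ x y, ?_⟩
  intro wn w hwn hw hL2
  have hL1 : Tendsto (fun n => ∫ τ in Metric.closedBall (0 : Rd d) ρ, |wn n τ - w τ|)
      atTop (nhds 0) :=
    tendsto_integral_norm_of_tendsto_eLpNorm one_le_two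
      (fun n => ((integrable_of_mem_Uad (hwn n)).sub (integrable_of_mem_Uad hw)).1) hL2
  have hbound := hL1.const_mul (4 * (eLpNorm f ⊤ (volume : Measure (Rd d))).toReal ^ 2)
  rw [mul_zero] at hbound
  refine tendstoUniformly_of_dist_le hbound fun n q => ?_
  rw [Real.dist_eq, abs_sub_comm]
  exact abs_kernelW_sub_le hfL (hwn n) hw q.1 q.2

/-- Lipschitz estimate of the kernel with respect to the weight, and the resulting
uniform convergence of kernels under `L²` convergence of weights. -/
theorem stmt12
    {d : ℕ} (hd : 1 ≤ d)
    (Ω : Set (Rd d)) (hΩm : MeasurableSet Ω) (hΩb : Bornology.IsBounded Ω)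
    (ε : ℝ) (hε : 0 < ε)
    (ΩI : Set (Rd d)) (hΩI : ΩI = interDom Ω ε)
    (Ohat : Set (Rd d)) (hOhat : Ohat = Ω ∪ ΩI)
    (ρ : ℝ) (hρ : 0 < ρ) (Wb : ℝ) (hWb : 0 < Wb)
    (f : Rd d → ℝ) (hfL : MemLp f ⊤ (volume : Measure (Rd d)))
    (hf0 : ∀ᵐ x : Rd d ∂volume, x ∉ Ohat → f x = 0)
 :
    (∀ w₁ ∈ Uad (d := d) ρ Wb, ∀ w₂ ∈ Uad (d := d) ρ Wb, ∀ x y : Rd d,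
      |kernelW ρ ε f w₁ x y - kernelW ρ ε f w₂ x y| ≤
        4 * (eLpNorm f ⊤ (volume : Measure (Rd d))).toReal ^ 2 *
          ∫ τ in Metric.closedBall (0 : Rd d) ρ, |w₁ τ - w₂ τ|) ∧
      ∀ (wn : ℕ → Rd d → ℝ) (w : Rd d → ℝ),
        (∀ n, wn n ∈ Uad (d := d) ρ Wb) → w ∈ Uad (d := d) ρ Wb →
        Tendsto (fun n => eLpNorm (fun τ => wn n τ - w τ) 2
          (volume.restrict (Metric.closedBall (0 : Rd d) ρ))) atTop (nhds 0) →
        TendstoUniformly (fun n (q : Rd d × Rd d) => kernelW ρ ε f (wn n) q.1 q.2)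
          (fun q : Rd d × Rd d => kernelW ρ ε f w q.1 q.2) atTop :=
  stmt12_general ε ρ Wb f hfL
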